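/- arXiv:1506.01345 — 2 statements merged into one kernel-verified Lean document; each statement's English description precedes it below -/
import Mathlib

section
/- For all n ∈ ℕ: |{(π,ρ) ∈ NC(n)² : π ∧ ρ = 0_n}| = Σ_{π ∈ NC(n)} Π_{V ∈ π} m^{irr}_{|V|}, where m^{irr}_k := |{(α,β) ∈ NC(k)² : α ∨ β = 1_k and α ∧ β = 0_k}|. -/
open scoped Classical

/-- A setoid (partition) of `Fin n` is non-crossing if there is no crossing
`a < b < c < d` with `a ∼ c`, `b ∼ d` but `a` and `b` in distinct blocks. -/
def IsNC {n : ℕ} (S : Setoid (Fin n)) : Prop :=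
  ∀ a b c d : Fin n, a < b → b < c → c < d → S.r a c → S.r b d → S.r a b

/-- A partition is a pairing if every block has exactly two elements. -/
def IsPairing {m : ℕ} (T : Setoid (Fin m)) : Prop :=
  ∀ x : Fin m, ∃ y : Fin m, y ≠ x ∧ T.r x y ∧ ∀ z : Fin m, T.r x z → z = x ∨ z = y

/-- The block of `i` in the partition `S`, as a finset. -/
noncomputable def blockOf {n : ℕ} (S : Setoid (Fin n)) (i : Fin n) : Finset (Fin n) :=
  Finset.univ.filter (fun j => S.r i j)

lemma blockOf_nonempty {n : ℕ} (S : Setoid (Fin n)) (i : Fin n) :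
    (blockOf S i).Nonempty :=
  ⟨i, by simp [blockOf, S.iseqv.refl i]⟩

/-- The permutation `P_S` which performs an increasing cycle on every block of `S`:
it sends `i` to the next larger element of its block, or to the minimum of the
block if `i` is the largest element of its block. -/
noncomputable def nextP {n : ℕ} (S : Setoid (Fin n)) (i : Fin n) : Fin n :=
  if h : ((blockOf S i).filter (fun j => i < j)).Nonempty
  then ((blockOf S i).filter (fun j => i < j)).min' h
  else (blockOf S i).min' (blockOf_nonempty S i)

/-- The inverse permutation `P_S⁻¹` (decreasing cycle on every block of `S`). -/
noncomputable def prevP {n : ℕ} (S : Setoid (Fin n)) (i : Fin n) : Fin n :=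
  if h : ((blockOf S i).filter (fun j => j < i)).Nonempty
  then ((blockOf S i).filter (fun j => j < i)).max' h
  else (blockOf S i).max' (blockOf_nonempty S i)

/-- `0`-indexed version of the point `2i-1` of `{1,…,2n}`. -/
def dEven {n : ℕ} (j : Fin n) : Fin (2*n) := ⟨2*j.val, by have := j.isLt; omega⟩

/-- `0`-indexed version of the point `2i` of `{1,…,2n}`. -/
def dOdd {n : ℕ} (j : Fin n) : Fin (2*n) := ⟨2*j.val+1, by have := j.isLt; omega⟩

/-- The doubling construction `π ↦ A(π)`: the pairing of `{1,…,2n}` generated by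
pairing each point `2i` with `2P_π(i) - 1`, so that the associated permutation
satisfies `P_{A(π)}(2i) = 2P_π(i) - 1` and `P_{A(π)}(2i-1) = 2P_π⁻¹(i)`. -/
noncomputable def archSetoid {n : ℕ} (S : Setoid (Fin n)) : Setoid (Fin (2*n)) :=
  Relation.EqvGen.setoid (fun a b => ∃ j : Fin n, a = dOdd j ∧ b = dEven (nextP S j))

/-- The meandric system permutation `M_{π,ρ} ∈ S_{2n}`, defined by
`M_{π,ρ}(2i-1) = 2P_π⁻¹(i)` and `M_{π,ρ}(2i) = 2P_ρ(i) - 1` (here `0`-indexed). -/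
noncomputable def meanderMap {n : ℕ} (π ρ : Setoid (Fin n)) (x : Fin (2*n)) : Fin (2*n) :=
  if x.val % 2 = 0
  then dOdd (prevP π ⟨x.val / 2, by have := x.isLt; omega⟩)
  else dEven (nextP ρ ⟨x.val / 2, by have := x.isLt; omega⟩)

/-- The orbit partition of a map. -/
def orbitSetoid {m : ℕ} (f : Fin m → Fin m) : Setoid (Fin m) :=
  Relation.EqvGen.setoid (fun a b => f a = b)

/-- Number of orbits of a map. -/
noncomputable def numOrbits {m : ℕ} (f : Fin m → Fin m) : ℕ :=
  Nat.card (Quotient (orbitSetoid f))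

/-- `S` is a union of blocks of the partition `T`. -/
def IsBlockUnion {m : ℕ} (T : Setoid (Fin m)) (S : Set (Fin m)) : Prop :=
  ∀ x ∈ S, ∀ y, T.r x y → y ∈ S

/-- `S` is invariant under `f`. -/
def MInvariant {m : ℕ} (f : Fin m → Fin m) (S : Set (Fin m)) : Prop :=
  ∀ x ∈ S, f x ∈ S

/-- The meandric system `M_{π,ρ}` is reducible: some proper subinterval
`{a,…,b}` of `{1,…,2n}` is invariant under `M_{π,ρ}`. -/
noncomputable def Reducible {n : ℕ} (π ρ : Setoid (Fin n)) : Prop :=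
  ∃ a b : Fin (2*n), a ≤ b ∧ b.val - a.val < 2*n - 1 ∧
    MInvariant (meanderMap π ρ) {x | a ≤ x ∧ x ≤ b}

/-- The join in the lattice of non-crossing partitions: the smallest
non-crossing partition above both `π` and `ρ`. -/
noncomputable def ncJoin {m : ℕ} (π ρ : Setoid (Fin m)) : Setoid (Fin m) :=
  sInf {τ | IsNC τ ∧ π ≤ τ ∧ ρ ≤ τ}

/-- The moment-cumulant formula of free probability: `mom n` is the sum over all
non-crossing partitions of `{1,…,n}` of the products of cumulants `κ` indexed
by the block sizes.  This uniquely determines the free cumulants `κ n`, `n ≥ 1`,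
of a sequence of moments. -/
def MomCum {F : Type*} [Field F] (mom κ : ℕ → F) : Prop :=
  ∀ n : ℕ, 0 < n →
    mom n = ∑ᶠ S ∈ {S : Setoid (Fin n) | IsNC S}, ∏ᶠ B ∈ Setoid.classes S, κ B.ncard

/-- The number of irreducible meandric systems on `2k` bridges, described as the
number of pairs `(π,ρ) ∈ NC(k)²` with `π ∨ ρ = 1_k`, `π ∧ ρ = 0_k`. -/
noncomputable def mirr (k : ℕ) : ℕ :=
  Nat.card {pr : Setoid (Fin k) × Setoid (Fin k) //
    IsNC pr.1 ∧ IsNC pr.2 ∧ ncJoin pr.1 pr.2 = ⊤ ∧ pr.1 ⊓ pr.2 = ⊥}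

/-- The number of pairs `(π,ρ) ∈ NC(n)²` whose meandric system `M_{π,ρ}` has
exactly `k` orbits (connected components). -/
noncomputable def mcount (n k : ℕ) : ℕ :=
  Nat.card {pr : Setoid (Fin n) × Setoid (Fin n) //
    IsNC pr.1 ∧ IsNC pr.2 ∧ numOrbits (meanderMap pr.1 pr.2) = k}

/-- The number of meanders on `2n` bridges. -/
noncomputable def meanderNum (n : ℕ) : ℕ := mcount n 1

/-! Write `S` for the non-crossing join `π ∨ ρ`. Restricting `π` and `ρ` to the blocks of `S`
(each block relabelled increasingly by `Fin |B|`) turns a pair with `π ∧ ρ = 0_n` and `π ∨ ρ = S`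
into a family of irreducible pairs, one per block, and gluing inverts this. The point is that
below a non-crossing `S`, non-crossingness, the meet and the non-crossing join are all computed
blockwise; for the join this uses that refining a single block of `S` by a non-crossing
partition of that block keeps `S` non-crossing. Summing the fibre sizes over `S ∈ NC(n)` gives
the formula. -/

instance {α : Type*} [Finite α] : Finite (Setoid α) :=
  Finite.of_injective (fun S : Setoid α => S.r) fun _ _ h =>
    Setoid.ext fun x y => iff_of_eq (congrFun₂ h x y)

section NonCrossing

variable {m : ℕ} {π ρ τ : Setoid (Fin m)}

lemma isNC_top : IsNC (⊤ : Setoid (Fin m)) := fun _ _ _ _ _ _ _ _ _ => trivial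

lemma isNC_ncJoin (π ρ : Setoid (Fin m)) : IsNC (ncJoin π ρ) :=
  fun a b c d hab hbc hcd hac hbd τ hτ =>
    hτ.1 a b c d hab hbc hcd (hac τ hτ) (hbd τ hτ)

lemma le_ncJoin_left : π ≤ ncJoin π ρ := le_sInf fun _ hτ => hτ.2.1

lemma le_ncJoin_right : ρ ≤ ncJoin π ρ := le_sInf fun _ hτ => hτ.2.2

lemma ncJoin_le (hτ : IsNC τ) (hπ : π ≤ τ) (hρ : ρ ≤ τ) : ncJoin π ρ ≤ τ :=
  sInf_le ⟨hτ, hπ, hρ⟩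

end NonCrossing

section Blocks

variable {n : ℕ} {S π ρ τ : Setoid (Fin n)} {B : Set (Fin n)}

noncomputable def blockEmb (B : Set (Fin n)) : Fin B.ncard ↪o Fin n :=
  B.toFinset.orderEmbOfFin (Set.ncard_eq_toFinset_card' B).symm

lemma blockEmb_mem (B : Set (Fin n)) (i : Fin B.ncard) : blockEmb B i ∈ B :=
  Set.mem_toFinset.mp (Finset.orderEmbOfFin_mem _ _ i)

lemma exists_blockEmb_eq {x : Fin n} (hx : x ∈ B) : ∃ i, blockEmb B i = x := by
  rwa [← Set.mem_range, blockEmb, Finset.range_orderEmbOfFin, Set.coe_toFinset]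

lemma rel_of_mem_classes (hB : B ∈ S.classes) {x y : Fin n} (hx : x ∈ B) (hy : y ∈ B) :
    S.r x y :=
  S.rel_iff_exists_classes.mpr ⟨B, hB, hx, hy⟩

lemma mem_of_mem_classes (hB : B ∈ S.classes) {x y : Fin n} (hx : x ∈ B) (hxy : S.r x y) :
    y ∈ B := by
  obtain ⟨w, rfl⟩ := hB
  exact S.trans' (S.symm' hxy) hx

noncomputable def restrictBlock (B : Set (Fin n)) (π : Setoid (Fin n)) : Setoid (Fin B.ncard) :=
  π.comap (blockEmb B)

lemma restrictBlock_mono (h : π ≤ τ) : restrictBlock B π ≤ restrictBlock B τ :=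
  fun _ _ hij => h hij

lemma restrictBlock_inf : restrictBlock B (π ⊓ ρ) = restrictBlock B π ⊓ restrictBlock B ρ := rfl

lemma restrictBlock_bot : restrictBlock B (⊥ : Setoid (Fin n)) = ⊥ :=
  le_bot_iff.mp fun _ _ hij => (blockEmb B).injective hij

lemma restrictBlock_self (hB : B ∈ S.classes) : restrictBlock B S = ⊤ :=
  Setoid.eq_top_iff.mpr fun i j => rel_of_mem_classes hB (blockEmb_mem B i) (blockEmb_mem B j)

lemma IsNC.restrictBlock (hπ : IsNC π) : IsNC (restrictBlock B π) :=
  fun _ _ _ _ hab hbc hcd => hπ _ _ _ _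
    ((blockEmb B).strictMono hab) ((blockEmb B).strictMono hbc) ((blockEmb B).strictMono hcd)

end Blocks

section Blockwise

variable {n : ℕ} {S π ρ τ : Setoid (Fin n)}

lemma le_of_forall_restrictBlock_le (hπ : π ≤ S)
    (h : ∀ B ∈ S.classes, restrictBlock B π ≤ restrictBlock B τ) : π ≤ τ := by
  intro x y hxy
  obtain ⟨B, hB, hx, hy⟩ := S.rel_iff_exists_classes.mp (hπ hxy)
  obtain ⟨i, rfl⟩ := exists_blockEmb_eq hx
  obtain ⟨j, rfl⟩ := exists_blockEmb_eq hy
  exact h B hB hxy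

lemma eq_bot_iff_forall_restrictBlock (hπ : π ≤ S) :
    π = ⊥ ↔ ∀ B ∈ S.classes, restrictBlock B π = ⊥ :=
  ⟨fun h _ _ => h ▸ restrictBlock_bot, fun h => le_bot_iff.mp <|
    le_of_forall_restrictBlock_le hπ fun B hB => by rw [h B hB, restrictBlock_bot]⟩

lemma isNC_of_forall_restrictBlock (hS : IsNC S) (hπ : π ≤ S)
    (h : ∀ B ∈ S.classes, IsNC (restrictBlock B π)) : IsNC π := by
  intro a b c d hab hbc hcd hac hbd
  obtain ⟨B, hB, ha, hb⟩ :=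
    S.rel_iff_exists_classes.mp (hS a b c d hab hbc hcd (hπ hac) (hπ hbd))
  obtain ⟨k, rfl⟩ := exists_blockEmb_eq (mem_of_mem_classes hB ha (hπ hac))
  obtain ⟨l, rfl⟩ := exists_blockEmb_eq (mem_of_mem_classes hB hb (hπ hbd))
  obtain ⟨i, rfl⟩ := exists_blockEmb_eq ha
  obtain ⟨j, rfl⟩ := exists_blockEmb_eq hb
  simp only [(blockEmb B).lt_iff_lt] at hab hbc hcd
  exact h B hB i j k l hab hbc hcd hac hbd

lemma eq_of_blockEmb_eq {B B' : S.classes} {i : Fin B.1.ncard} {j : Fin B'.1.ncard}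
    (h : blockEmb B.1 i = blockEmb B'.1 j) : B = B' :=
  Subtype.ext <| Setoid.eq_of_mem_classes B.2 (blockEmb_mem _ i) B'.2 (h ▸ blockEmb_mem _ j)

noncomputable def glueBlocks (S : Setoid (Fin n))
    (σ : ∀ B : S.classes, Setoid (Fin B.1.ncard)) : Setoid (Fin n) where
  r x y := ∃ (B : S.classes) (i j : Fin B.1.ncard),
    blockEmb B.1 i = x ∧ blockEmb B.1 j = y ∧ (σ B).r i j
  iseqv := by
    refine ⟨fun x => ?_, ?_, ?_⟩
    · obtain ⟨i, hi⟩ := exists_blockEmb_eq (B := {z | S.r z x}) (S.refl' x)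
      exact ⟨⟨_, S.mem_classes x⟩, i, i, hi, hi, (σ ⟨_, S.mem_classes x⟩).refl' i⟩
    · rintro _ _ ⟨B, i, j, rfl, rfl, hij⟩
      exact ⟨B, j, i, rfl, rfl, (σ B).symm' hij⟩
    · rintro _ _ _ ⟨B, i, j, rfl, rfl, hij⟩ ⟨B', j', k, hj, rfl, hjk⟩
      obtain rfl := eq_of_blockEmb_eq hj
      obtain rfl := (blockEmb _).injective hj
      exact ⟨_, i, k, rfl, rfl, (σ _).trans' hij hjk⟩

variable {σ : ∀ B : S.classes, Setoid (Fin B.1.ncard)}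

lemma glueBlocks_le : glueBlocks S σ ≤ S := by
  rintro _ _ ⟨B, i, j, rfl, rfl, -⟩
  exact rel_of_mem_classes B.2 (blockEmb_mem _ i) (blockEmb_mem _ j)

lemma restrictBlock_glueBlocks (B : S.classes) : restrictBlock B.1 (glueBlocks S σ) = σ B := by
  refine Setoid.ext fun i j => ⟨?_, fun h => ⟨B, i, j, rfl, rfl, h⟩⟩
  rintro ⟨B', i', j', hi, hj, h⟩
  obtain rfl := eq_of_blockEmb_eq hi
  obtain rfl := (blockEmb _).injective hi
  obtain rfl := (blockEmb _).injective hj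
  exact h

lemma glueBlocks_restrictBlock (hπ : π ≤ S) : glueBlocks S (fun B => restrictBlock B.1 π) = π :=
  le_antisymm (by rintro _ _ ⟨B, i, j, rfl, rfl, h⟩; exact h) <|
    le_of_forall_restrictBlock_le hπ fun B hB =>
      (restrictBlock_glueBlocks (σ := fun B => restrictBlock B.1 π) ⟨B, hB⟩).ge

lemma isNC_glueBlocks (hS : IsNC S) (hσ : ∀ B, IsNC (σ B)) : IsNC (glueBlocks S σ) :=
  isNC_of_forall_restrictBlock hS glueBlocks_le fun B hB =>
    (restrictBlock_glueBlocks ⟨B, hB⟩).symm ▸ hσ ⟨B, hB⟩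

lemma ncJoin_eq_iff (hS : IsNC S) (hπ : π ≤ S) (hρ : ρ ≤ S) :
    ncJoin π ρ = S ↔ ∀ B ∈ S.classes, ncJoin (restrictBlock B π) (restrictBlock B ρ) = ⊤ := by
  constructor
  · intro hJ B hB
    -- refine the block `B` of `S` by the join of the restrictions, keeping the other blocks
    set σ : ∀ B : S.classes, Setoid (Fin B.1.ncard) :=
      Function.update (fun _ => ⊤) ⟨B, hB⟩ (ncJoin (restrictBlock B π) (restrictBlock B ρ))
    have hσ : ∀ B', IsNC (σ B') ∧ restrictBlock B'.1 π ≤ σ B' ∧ restrictBlock B'.1 ρ ≤ σ B' := by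
      intro B'
      rcases eq_or_ne B' ⟨B, hB⟩ with rfl | hB'
      · simp only [σ, Function.update_self]
        exact ⟨isNC_ncJoin _ _, le_ncJoin_left, le_ncJoin_right⟩
      · simp only [σ, Function.update_of_ne hB']
        exact ⟨isNC_top, le_top, le_top⟩
    have hle : ∀ {υ}, υ ≤ S → (∀ B', restrictBlock B'.1 υ ≤ σ B') → υ ≤ glueBlocks S σ :=
      fun hυ h => le_of_forall_restrictBlock_le hυ fun B' hB' =>
        (h ⟨B', hB'⟩).trans (restrictBlock_glueBlocks ⟨B', hB'⟩).ge
    have hS_le : S ≤ glueBlocks S σ := by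
      have := ncJoin_le (isNC_glueBlocks hS fun B' => (hσ B').1)
        (hle hπ fun B' => (hσ B').2.1) (hle hρ fun B' => (hσ B').2.2)
      rwa [hJ] at this
    have := (restrictBlock_mono (B := B) hS_le).trans (restrictBlock_glueBlocks ⟨B, hB⟩).le
    rw [restrictBlock_self hB, top_le_iff] at this
    simpa only [σ, Function.update_self] using this
  · intro h
    refine le_antisymm (ncJoin_le hS hπ hρ) (le_of_forall_restrictBlock_le le_rfl fun B hB => ?_)
    rw [restrictBlock_self hB, ← h B hB]
    exact ncJoin_le (isNC_ncJoin π ρ).restrictBlock (restrictBlock_mono le_ncJoin_left)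
      (restrictBlock_mono le_ncJoin_right)

lemma glueBlocks_inf_eq_bot {σ' : ∀ B : S.classes, Setoid (Fin B.1.ncard)}
    (h : ∀ B, σ B ⊓ σ' B = ⊥) : glueBlocks S σ ⊓ glueBlocks S σ' = ⊥ :=
  (eq_bot_iff_forall_restrictBlock (inf_le_left.trans glueBlocks_le)).mpr fun B hB => by
    rw [restrictBlock_inf, restrictBlock_glueBlocks ⟨B, hB⟩, restrictBlock_glueBlocks ⟨B, hB⟩]
    exact h ⟨B, hB⟩

lemma ncJoin_glueBlocks (hS : IsNC S) {σ' : ∀ B : S.classes, Setoid (Fin B.1.ncard)}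
    (h : ∀ B, ncJoin (σ B) (σ' B) = ⊤) : ncJoin (glueBlocks S σ) (glueBlocks S σ') = S :=
  (ncJoin_eq_iff hS glueBlocks_le glueBlocks_le).mpr fun B hB => by
    rw [restrictBlock_glueBlocks ⟨B, hB⟩, restrictBlock_glueBlocks ⟨B, hB⟩]
    exact h ⟨B, hB⟩

end Blockwise

section Counting

variable {n : ℕ}

def IsIrreduciblePair {k : ℕ} (π ρ : Setoid (Fin k)) : Prop :=
  IsNC π ∧ IsNC ρ ∧ ncJoin π ρ = ⊤ ∧ π ⊓ ρ = ⊥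

lemma isIrreduciblePair_restrictBlock {π ρ : Setoid (Fin n)} (hπ : IsNC π) (hρ : IsNC ρ)
    (hbot : π ⊓ ρ = ⊥) {S : Setoid (Fin n)} (hJ : ncJoin π ρ = S) {B : Set (Fin n)}
    (hB : B ∈ S.classes) : IsIrreduciblePair (restrictBlock B π) (restrictBlock B ρ) := by
  subst hJ
  exact ⟨hπ.restrictBlock, hρ.restrictBlock,
    (ncJoin_eq_iff (isNC_ncJoin π ρ) le_ncJoin_left le_ncJoin_right).mp rfl B hB,
    (eq_bot_iff_forall_restrictBlock (inf_le_left.trans le_ncJoin_left)).mp hbot B hB⟩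

def MeetBotPairs (n : ℕ) : Type :=
  {pr : Setoid (Fin n) × Setoid (Fin n) // IsNC pr.1 ∧ IsNC pr.2 ∧ pr.1 ⊓ pr.2 = ⊥}

instance : Finite (MeetBotPairs n) := Subtype.finite

noncomputable def MeetBotPairs.ncJoin (pr : MeetBotPairs n) : {S : Setoid (Fin n) // IsNC S} :=
  ⟨_root_.ncJoin pr.1.1 pr.1.2, isNC_ncJoin _ _⟩

noncomputable def ncJoinFiberEquiv (S : {S : Setoid (Fin n) // IsNC S}) :
    {pr : MeetBotPairs n // pr.ncJoin = S} ≃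
      ∀ B : S.1.classes, {pr : Setoid (Fin B.1.ncard) × Setoid (Fin B.1.ncard) //
        IsIrreduciblePair pr.1 pr.2} where
  toFun pr B := ⟨(restrictBlock B.1 pr.1.1.1, restrictBlock B.1 pr.1.1.2),
    isIrreduciblePair_restrictBlock pr.1.2.1 pr.1.2.2.1 pr.1.2.2.2
      (congrArg Subtype.val pr.2) B.2⟩
  invFun σ := ⟨⟨(glueBlocks S.1 fun B => (σ B).1.1, glueBlocks S.1 fun B => (σ B).1.2),
      isNC_glueBlocks S.2 fun B => (σ B).2.1, isNC_glueBlocks S.2 fun B => (σ B).2.2.1,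
      glueBlocks_inf_eq_bot fun B => (σ B).2.2.2.2⟩,
    Subtype.ext <| ncJoin_glueBlocks S.2 fun B => (σ B).2.2.2.1⟩
  left_inv pr := by
    have hJ : ncJoin pr.1.1.1 pr.1.1.2 = S.1 := congrArg Subtype.val pr.2
    exact Subtype.ext <| Subtype.ext <| Prod.ext
      (glueBlocks_restrictBlock (hJ ▸ le_ncJoin_left))
      (glueBlocks_restrictBlock (hJ ▸ le_ncJoin_right))
  right_inv σ := funext fun B => Subtype.ext <| Prod.ext
    (restrictBlock_glueBlocks B) (restrictBlock_glueBlocks B)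

lemma card_ncJoin_fiber (S : {S : Setoid (Fin n) // IsNC S}) :
    Nat.card {pr : MeetBotPairs n // pr.ncJoin = S} = ∏ᶠ B ∈ S.1.classes, mirr B.ncard := by
  have : Fintype S.1.classes := Fintype.ofFinite _
  rw [Nat.card_congr (ncJoinFiberEquiv S), Nat.card_pi, ← finprod_set_coe_eq_finprod_mem,
    finprod_eq_prod_of_fintype]
  rfl

end Counting

/-- `|{(π,ρ) ∈ NC(n)² : π ∧ ρ = 0_n}| = Σ_{π ∈ NC(n)} Π_{V ∈ π} m^{irr}_{|V|}`. -/
theorem card_meet_bot_eq_sum_mirr (n : ℕ) :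
    Nat.card {pr : Setoid (Fin n) × Setoid (Fin n) //
        IsNC pr.1 ∧ IsNC pr.2 ∧ pr.1 ⊓ pr.2 = ⊥}
      = ∑ᶠ S ∈ {S : Setoid (Fin n) | IsNC S},
          ∏ᶠ B ∈ Setoid.classes S, mirr B.ncard := by
  have : Fintype {S : Setoid (Fin n) // IsNC S} := Fintype.ofFinite _
  calc Nat.card (MeetBotPairs n)
      = Nat.card (Σ S, {pr : MeetBotPairs n // pr.ncJoin = S}) :=
        Nat.card_congr (Equiv.sigmaFiberEquiv MeetBotPairs.ncJoin).symm
    _ = ∑ S : {S : Setoid (Fin n) // IsNC S}, ∏ᶠ B ∈ S.1.classes, mirr B.ncard := by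
        rw [Nat.card_sigma]
        exact Finset.sum_congr rfl fun S _ => card_ncJoin_fiber S
    _ = ∑ᶠ S ∈ {S : Setoid (Fin n) | IsNC S}, ∏ᶠ B ∈ Setoid.classes S, mirr B.ncard := by
        rw [← finsum_eq_sum_of_fintype]
        exact finsum_set_coe_eq_finsum_mem (f := fun S : Setoid (Fin n) => ∏ᶠ B ∈ S.classes,
          mirr B.ncard) _
end

section
/- Let ν: ℂ[X] → ℂ be the unital linear functional whose free cumulants are κ_{2n−1}(ν) = 0 and κ_{2n}(ν) = m^{(1)}_n for all n ≥ 1, where m^{(1)}_n is the number of meanders on 2n bridges. Then ν(X^{2n−1}) = 0 and ν(X^{2n}) equals the number of pairs (π,ρ) ∈ NC(n)² such that the meandric system M_{π,ρ} is strictly non-crossing (i.e., the orbit partition of M_{π,ρ} is a non-crossing partition of {1,...,2n}). -/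
open scoped Classical

/-!
The doubling construction `π ↦ A(π)` identifies non-crossing partitions of `n` points with
non-crossing pairings of `2n` points, and turns `M_{π,ρ}` into the meandric system with upper
arcs `A(π)` and lower arcs `A(ρ)`, whose orbits are its components. A meandric system whose
components form a given non-crossing partition `S` is the same as a meander on each block of `S`;
so the numbers of meandric systems on `m` points with non-crossing components satisfy the
moment-cumulant formula with the numbers of meanders as cumulants. These cumulants are the `κ_m`:
both vanish for odd `m`, as an odd set has no pairing. Hence `ν(X^m)` is the number of meandric
systems on `m` points with non-crossing components, which is `0` for odd `m`.
-/
section CyclicSuccessor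

variable {n : ℕ} (S : Setoid (Fin n)) {i j x : Fin n}

lemma mem_blockOf : j ∈ blockOf S i ↔ S.r i j := by
  simp [blockOf]

lemma nextP_rel (i : Fin n) : S.r i (nextP S i) := by
  unfold nextP
  split
  · exact (mem_blockOf S).1 (Finset.mem_filter.1 (Finset.min'_mem _ _)).1
  · exact (mem_blockOf S).1 (Finset.min'_mem _ _)

lemma prevP_rel (i : Fin n) : S.r i (prevP S i) := by
  unfold prevP
  split
  · exact (mem_blockOf S).1 (Finset.mem_filter.1 (Finset.max'_mem _ _)).1
  · exact (mem_blockOf S).1 (Finset.max'_mem _ _)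

lemma nextP_eq_of_lt (hij : S.r i j) (hlt : i < j) (hmin : ∀ x, S.r i x → i < x → j ≤ x) :
    nextP S i = j := by
  have hj : j ∈ (blockOf S i).filter (i < ·) := by simp [mem_blockOf, hij, hlt]
  rw [nextP, dif_pos ⟨j, hj⟩]
  refine le_antisymm (Finset.min'_le _ _ hj) (Finset.le_min' _ _ _ fun x hx => ?_)
  simp only [Finset.mem_filter, mem_blockOf] at hx
  exact hmin x hx.1 hx.2

lemma nextP_eq_of_forall (hij : S.r i j) (h : ∀ x, S.r i x → j ≤ x ∧ x ≤ i) :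
    nextP S i = j := by
  have hnone : ¬ ((blockOf S i).filter (i < ·)).Nonempty := by
    rintro ⟨x, hx⟩
    simp only [Finset.mem_filter, mem_blockOf] at hx
    exact (h x hx.1).2.not_gt hx.2
  rw [nextP, dif_neg hnone]
  exact le_antisymm (Finset.min'_le _ _ ((mem_blockOf S).2 hij))
    (Finset.le_min' _ _ _ fun x hx => (h x ((mem_blockOf S).1 hx)).1)

lemma prevP_eq_of_lt (hij : S.r i j) (hlt : j < i) (hmax : ∀ x, S.r i x → x < i → x ≤ j) :
    prevP S i = j := by
  have hj : j ∈ (blockOf S i).filter (· < i) := by simp [mem_blockOf, hij, hlt]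
  rw [prevP, dif_pos ⟨j, hj⟩]
  refine le_antisymm (Finset.max'_le _ _ _ fun x hx => ?_) (Finset.le_max' _ _ hj)
  simp only [Finset.mem_filter, mem_blockOf] at hx
  exact hmax x hx.1 hx.2

lemma prevP_eq_of_forall (hij : S.r i j) (h : ∀ x, S.r i x → i ≤ x ∧ x ≤ j) :
    prevP S i = j := by
  have hnone : ¬ ((blockOf S i).filter (· < i)).Nonempty := by
    rintro ⟨x, hx⟩
    simp only [Finset.mem_filter, mem_blockOf] at hx
    exact (h x hx.1).1.not_gt hx.2
  rw [prevP, dif_neg hnone]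
  exact le_antisymm (Finset.max'_le _ _ _ fun x hx => (h x ((mem_blockOf S).1 hx)).2)
    (Finset.le_max' _ _ ((mem_blockOf S).2 hij))

lemma nextP_le (hx : S.r i x) (hix : i < x) : nextP S i ≤ x := by
  have hx' : x ∈ (blockOf S i).filter (i < ·) := by simp [mem_blockOf, hx, hix]
  rw [nextP, dif_pos ⟨x, hx'⟩]
  exact Finset.min'_le _ _ hx'

lemma lt_nextP (hx : S.r i x) (hix : i < x) : i < nextP S i := by
  have hx' : x ∈ (blockOf S i).filter (i < ·) := by simp [mem_blockOf, hx, hix]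
  rw [nextP, dif_pos ⟨x, hx'⟩]
  exact (Finset.mem_filter.1 (Finset.min'_mem _ ⟨x, hx'⟩)).2

lemma le_prevP (hx : S.r i x) (hxi : x < i) : x ≤ prevP S i := by
  have hx' : x ∈ (blockOf S i).filter (· < i) := by simp [mem_blockOf, hx, hxi]
  rw [prevP, dif_pos ⟨x, hx'⟩]
  exact Finset.le_max' _ _ hx'

lemma prevP_lt (hx : S.r i x) (hxi : x < i) : prevP S i < i := by
  have hx' : x ∈ (blockOf S i).filter (· < i) := by simp [mem_blockOf, hx, hxi]
  rw [prevP, dif_pos ⟨x, hx'⟩]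
  exact (Finset.mem_filter.1 (Finset.max'_mem _ ⟨x, hx'⟩)).2

lemma nextP_le_and_le_of_nextP_le (hwrap : nextP S i ≤ i) (hx : S.r i x) :
    nextP S i ≤ x ∧ x ≤ i := by
  have hmax : x ≤ i := not_lt.1 fun hix => (lt_nextP S hx hix).not_ge hwrap
  refine ⟨?_, hmax⟩
  have hnone : ¬ ((blockOf S i).filter (i < ·)).Nonempty := by
    rintro ⟨y, hy⟩
    simp only [Finset.mem_filter, mem_blockOf] at hy
    exact (lt_nextP S hy.1 hy.2).not_ge hwrap
  rw [nextP, dif_neg hnone]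
  exact Finset.min'_le _ _ ((mem_blockOf S).2 hx)

lemma le_and_le_prevP_of_le_prevP (hwrap : i ≤ prevP S i) (hx : S.r i x) :
    i ≤ x ∧ x ≤ prevP S i := by
  have hmin : i ≤ x := not_lt.1 fun hxi => (prevP_lt S hx hxi).not_ge hwrap
  refine ⟨hmin, ?_⟩
  have hnone : ¬ ((blockOf S i).filter (· < i)).Nonempty := by
    rintro ⟨y, hy⟩
    simp only [Finset.mem_filter, mem_blockOf] at hy
    exact (prevP_lt S hy.1 hy.2).not_ge hwrap
  rw [prevP, dif_neg hnone]
  exact Finset.le_max' _ _ ((mem_blockOf S).2 hx)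

lemma prevP_nextP (i : Fin n) : prevP S (nextP S i) = i := by
  have hrel := S.symm (nextP_rel S i)
  rcases lt_or_ge i (nextP S i) with hup | hwrap
  · refine prevP_eq_of_lt S hrel hup fun x hx hxk => not_lt.1 fun hix => ?_
    exact (nextP_le S (S.trans (nextP_rel S i) hx) hix).not_gt hxk
  · refine prevP_eq_of_forall S hrel fun x hx => ?_
    exact nextP_le_and_le_of_nextP_le S hwrap (S.trans (nextP_rel S i) hx)

lemma nextP_prevP (i : Fin n) : nextP S (prevP S i) = i := by
  have hrel := S.symm (prevP_rel S i)
  rcases lt_or_ge (prevP S i) i with hdown | hwrap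
  · refine nextP_eq_of_lt S hrel hdown fun x hx hkx => not_lt.1 fun hxi => ?_
    exact (le_prevP S (S.trans (prevP_rel S i) hx) hxi).not_gt hkx
  · refine nextP_eq_of_forall S hrel fun x hx => ?_
    exact le_and_le_prevP_of_le_prevP S hwrap (S.trans (prevP_rel S i) hx)

end CyclicSuccessor

instance Setoid.finite {α : Type*} [Finite α] : Finite (Setoid α) :=
  Finite.of_injective (fun S : Setoid α => ⇑S) fun _ _ => Setoid.eq_iff_rel_eq.2

lemma Relation.EqvGen.iff_of_invariant {α : Type*} {r : α → α → Prop} {P : α → Prop}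
    (hP : ∀ a b, r a b → (P a ↔ P b)) {a b : α} (hab : Relation.EqvGen r a b) : P a ↔ P b := by
  induction hab with
  | rel x y hxy => exact hP x y hxy
  | refl => rfl
  | symm _ _ _ ih => exact ih.symm
  | trans _ _ _ _ _ ih₁ ih₂ => exact ih₁.trans ih₂

lemma orbitSetoid_le_iff {m : ℕ} {f : Fin m → Fin m} {S : Setoid (Fin m)} :
    orbitSetoid f ≤ S ↔ ∀ x, S.r x (f x) :=
  ⟨fun h _ => h (Relation.EqvGen.rel _ _ rfl),
    fun h => Setoid.eqvGen_le fun x _ hxy => hxy ▸ h x⟩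

lemma orbitSetoid_nextP {n : ℕ} (S : Setoid (Fin n)) : orbitSetoid (nextP S) = S := by
  refine le_antisymm (orbitSetoid_le_iff.2 (nextP_rel S)) fun a b hab => ?_
  have key : ∀ b a, S.r a b → a < b → (orbitSetoid (nextP S)).r a b := by
    intro b
    induction b using WellFoundedLT.induction with
    | ind b ih =>
      intro a hab hlt
      have hstep : (orbitSetoid (nextP S)).r (prevP S b) b :=
        Relation.EqvGen.rel _ _ (nextP_prevP S b)
      rcases (le_prevP S (S.symm hab) hlt).lt_or_eq with hlt' | heq
      · exact (orbitSetoid _).trans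
          (ih _ (prevP_lt S (S.symm hab) hlt) a (S.trans hab (prevP_rel S b)) hlt') hstep
      · exact heq ▸ hstep
  rcases lt_trichotomy a b with hlt | rfl | hgt
  · exact key b a hab hlt
  · exact (orbitSetoid _).refl a
  · exact (orbitSetoid _).symm (key a b (S.symm hab) hgt)

lemma iff_of_orbitSetoid {m : ℕ} {g : Fin m → Fin m} {P : Fin m → Prop}
    (hP : ∀ x, P (g x) ↔ P x) {a b : Fin m} (hab : (orbitSetoid g).r a b) : P a ↔ P b :=
  hab.iff_of_invariant fun x _ hxy => hxy ▸ (hP x).symm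

lemma numOrbits_eq_one_iff {m : ℕ} (hm : 0 < m) (f : Fin m → Fin m) :
    numOrbits f = 1 ↔ orbitSetoid f = ⊤ := by
  rw [numOrbits, Nat.card_eq_one_iff_unique, and_iff_left ⟨Quotient.mk _ ⟨0, hm⟩⟩,
    Quotient.subsingleton_iff]

section EvenOddPoints

variable {n : ℕ}

def half (x : Fin (2*n)) : Fin n := ⟨x.val / 2, by omega⟩

@[simp] lemma dEven_val (j : Fin n) : (dEven j).val = 2 * j.val := rfl

@[simp] lemma dOdd_val (j : Fin n) : (dOdd j).val = 2 * j.val + 1 := rfl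

@[simp] lemma half_val (x : Fin (2*n)) : (half x).val = x.val / 2 := rfl

@[simp] lemma half_dEven (j : Fin n) : half (dEven j) = j := Fin.ext (by simp)

@[simp] lemma half_dOdd (j : Fin n) : half (dOdd j) = j :=
  Fin.ext (by simp only [half_val, dOdd_val]; omega)

lemma half_mono : Monotone (half (n := n)) := fun _ _ h => Nat.div_le_div_right (c := 2) h

lemma dEven_half {x : Fin (2*n)} (hx : x.val % 2 = 0) : dEven (half x) = x :=
  Fin.ext (by simp only [dEven_val, half_val]; omega)

lemma dOdd_half {x : Fin (2*n)} (hx : x.val % 2 = 1) : dOdd (half x) = x :=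
  Fin.ext (by simp only [dOdd_val, half_val]; omega)

lemma exists_eq_dEven_or_exists_eq_dOdd (x : Fin (2*n)) :
    (∃ j, x = dEven j) ∨ ∃ j, x = dOdd j := by
  rcases Nat.mod_two_eq_zero_or_one x.val with h | h
  · exact Or.inl ⟨_, (dEven_half h).symm⟩
  · exact Or.inr ⟨_, (dOdd_half h).symm⟩

lemma meanderMap_dEven (π ρ : Setoid (Fin n)) (j : Fin n) :
    meanderMap π ρ (dEven j) = dOdd (prevP π j) := by
  rw [meanderMap, if_pos (by simp)]
  exact congrArg (dOdd ∘ prevP π) (half_dEven j)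

lemma meanderMap_dOdd (π ρ : Setoid (Fin n)) (j : Fin n) :
    meanderMap π ρ (dOdd j) = dEven (nextP ρ j) := by
  rw [meanderMap, if_neg (by simp)]
  exact congrArg (dEven ∘ nextP ρ) (half_dOdd j)

end EvenOddPoints

/-- A non-crossing pairing of a linear order, encoded as the fixed-point-free involution
exchanging the two ends of each arc. -/
structure IsNCPairing {α : Type*} [LinearOrder α] (f : α → α) : Prop where
  involutive : Function.Involutive f
  ne_self : ∀ x, f x ≠ x
  not_crossing : ∀ a b, a < b → b < f a → ¬ f a < f b

lemma Finset.even_card_of_involutive {α : Type*} {f : α → α} (hf : Function.Involutive f)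
    (hne : ∀ x, f x ≠ x) {s : Finset α} (hs : ∀ x ∈ s, f x ∈ s) : Even s.card := by
  rw [← ZMod.natCast_eq_zero_iff_even, Finset.card_eq_sum_ones, Nat.cast_sum]
  exact Finset.sum_involution (fun x _ => f x) (fun _ _ => by decide) (fun x _ _ => hne x) hs
    fun x _ => hf x

namespace IsNCPairing

variable {α : Type*} [LinearOrder α] {f : α → α} (hf : IsNCPairing f)
include hf

lemma of_semiconj {β : Type*} [LinearOrder β] {f' : β → β} {u : β → α} (hu : StrictMono u)
    (h : Function.Semiconj u f' f) : IsNCPairing f' where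
  involutive x := hu.injective (by rw [h.eq, h.eq, hf.involutive])
  ne_self x hx := hf.ne_self (u x) (by rw [← h.eq, hx])
  not_crossing a b hab hb hcross := hf.not_crossing (u a) (u b) (hu hab)
    (by rw [← h.eq]; exact hu hb) (by rw [← h.eq, ← h.eq]; exact hu hcross)

lemma even_card [Fintype α] : Even (Fintype.card α) :=
  Finset.even_card_of_involutive hf.involutive hf.ne_self fun _ _ => Finset.mem_univ _

lemma apply_mem_Ioo_iff {a x : α} :
    f x ∈ Set.Ioo a (f a) ↔ x ∈ Set.Ioo a (f a) := by
  have key : ∀ y, y ∈ Set.Ioo a (f a) → f y ∈ Set.Ioo a (f a) := by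
    rintro y ⟨hay, hyb⟩
    have hya : f y ≠ a := fun h => hyb.ne (by rw [← h, hf.involutive])
    have hyb' : f y ≠ f a := fun h => hay.ne' (hf.involutive.injective h)
    refine ⟨lt_of_not_ge fun h => ?_, lt_of_not_ge fun h => ?_⟩
    · exact hf.not_crossing (f y) a (h.lt_of_ne hya) (by rwa [hf.involutive])
        (by rwa [hf.involutive])
    · exact hf.not_crossing a y hay hyb ((Ne.symm hyb').lt_of_le h)
  exact ⟨fun h => hf.involutive x ▸ key _ h, key x⟩

lemma apply_mem_Icc_iff {a x : α} (ha : a < f a) :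
    f x ∈ Set.Icc a (f a) ↔ x ∈ Set.Icc a (f a) := by
  have hinj := hf.involutive.injective
  rw [← Set.Ioc_insert_left ha.le, ← Set.Ioo_insert_right ha, Set.mem_insert_iff,
    Set.mem_insert_iff, Set.mem_insert_iff, Set.mem_insert_iff, hf.apply_mem_Ioo_iff,
    hinj.eq_iff, ← hf.involutive a, hinj.eq_iff, hf.involutive a]
  tauto

end IsNCPairing

lemma IsNCPairing.val_mod_two_ne {m : ℕ} {f : Fin m → Fin m} (hf : IsNCPairing f) (x : Fin m) :
    (f x).val % 2 ≠ x.val % 2 := by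
  wlog hx : x < f x generalizing x
  · have := this (f x) (by rw [hf.involutive]; exact lt_of_le_of_ne (not_lt.1 hx) (hf.ne_self x))
    rw [hf.involutive] at this
    exact this.symm
  have hev := Finset.even_card_of_involutive hf.involutive hf.ne_self (s := Finset.Ioo x (f x))
    fun y hy => by simpa using hf.apply_mem_Ioo_iff.2 (by simpa using hy)
  rw [Fin.card_Ioo] at hev
  have : x.val < (f x).val := hx
  obtain ⟨c, hc⟩ := hev
  omega

/-- The partition of a meandric system with upper arcs `f` and lower arcs `g` into its
components. -/
def components {α : Type*} (f g : α → α) : Setoid α :=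
  Relation.EqvGen.setoid fun a b => f a = b ∨ g a = b

lemma components_le_iff {α : Type*} {f g : α → α} {S : Setoid α} :
    components f g ≤ S ↔ ∀ x, S.r x (f x) ∧ S.r x (g x) := by
  refine ⟨fun h x => ⟨h (Relation.EqvGen.rel _ _ (Or.inl rfl)),
    h (Relation.EqvGen.rel _ _ (Or.inr rfl))⟩, fun h => Setoid.eqvGen_le fun x _ hxy => ?_⟩
  rcases hxy with rfl | rfl
  exacts [(h x).1, (h x).2]

lemma components_rel_of_semiconj {α β : Type*} {f g : α → α} {f' g' : β → β} {u : β → α}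
    (hf : Function.Semiconj u f' f) (hg : Function.Semiconj u g' g) {i j : β}
    (hij : (components f' g').r i j) : (components f g).r (u i) (u j) := by
  refine (components_le_iff (S := (components f g).comap u)).2 (fun x => ⟨?_, ?_⟩) hij
  · exact Relation.EqvGen.rel _ _ (Or.inl (hf.eq x).symm)
  · exact Relation.EqvGen.rel _ _ (Or.inr (hg.eq x).symm)

lemma IsNC.rel_of_le {n : ℕ} {S : Setoid (Fin n)} (hS : IsNC S) {p q r s : Fin n}
    (hpq : p ≤ q) (hqr : q ≤ r) (hrs : r ≤ s) (hpr : S.r p r) (hqs : S.r q s) : S.r p q := by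
  rcases hpq.lt_or_eq with hpq | rfl
  · rcases hqr.lt_or_eq with hqr | rfl
    · rcases hrs.lt_or_eq with hrs | rfl
      · exact hS p q r s hpq hqr hrs hpr hqs
      · exact S.trans hpr (S.symm hqs)
    · exact hpr
  · exact S.refl p

section Doubling

variable {n : ℕ} (S : Setoid (Fin n))

/-- The pairing `A(S)` of the doubling construction, as an involution of `Fin (2*n)`. -/
noncomputable def doubling : Fin (2*n) → Fin (2*n) := meanderMap S S

lemma doubling_dEven (j : Fin n) : doubling S (dEven j) = dOdd (prevP S j) :=
  meanderMap_dEven S S j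

lemma doubling_dOdd (j : Fin n) : doubling S (dOdd j) = dEven (nextP S j) :=
  meanderMap_dOdd S S j

lemma rel_half_doubling (x : Fin (2*n)) : S.r (half x) (half (doubling S x)) := by
  rcases exists_eq_dEven_or_exists_eq_dOdd x with ⟨j, rfl⟩ | ⟨j, rfl⟩
  · simpa [doubling_dEven] using prevP_rel S j
  · simpa [doubling_dOdd] using nextP_rel S j

lemma doubling_involutive : Function.Involutive (doubling S) := by
  intro x
  rcases exists_eq_dEven_or_exists_eq_dOdd x with ⟨j, rfl⟩ | ⟨j, rfl⟩
  · rw [doubling_dEven, doubling_dOdd, nextP_prevP]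
  · rw [doubling_dOdd, doubling_dEven, prevP_nextP]

lemma doubling_ne_self (x : Fin (2*n)) : doubling S x ≠ x := by
  rcases exists_eq_dEven_or_exists_eq_dOdd x with ⟨j, rfl⟩ | ⟨j, rfl⟩
  · rw [doubling_dEven]
    exact fun h => by have := congrArg Fin.val h; simp only [dOdd_val, dEven_val] at this; omega
  · rw [doubling_dOdd]
    exact fun h => by have := congrArg Fin.val h; simp only [dOdd_val, dEven_val] at this; omega

/-- The arcs of `doubling S` within one block of `S` do not cross: an arc `2j+1 → 2·nextP S j`
encloses no point of the block, and an arc going right from an even point `2j` is the outer arc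
`2·min → 2·max+1` of the block. -/
lemma doubling_le_of_rel_half {a b : Fin (2*n)} (hab : a < b) (hb : b < doubling S a)
    (hrel : S.r (half a) (half b)) : doubling S b ≤ doubling S a := by
  rcases exists_eq_dEven_or_exists_eq_dOdd a with ⟨j, rfl⟩ | ⟨j, rfl⟩
  · rw [doubling_dEven] at hb ⊢
    have hwrap : j ≤ prevP S j := by
      rw [Fin.lt_def] at hab hb
      simp only [dEven_val, dOdd_val] at hab hb
      exact Fin.le_def.2 (by omega)
    have hle := (le_and_le_prevP_of_le_prevP S hwrap
      (S.trans (by simpa using hrel) (rel_half_doubling S b))).2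
    rw [Fin.le_def] at hle ⊢
    simp only [half_val, dOdd_val] at hle ⊢
    omega
  · rw [doubling_dOdd] at hb
    rw [half_dOdd] at hrel
    rw [Fin.lt_def] at hab hb
    simp only [dOdd_val, dEven_val] at hab hb
    exact absurd (nextP_le S hrel (Fin.lt_def.2 (by simp only [half_val]; omega)))
      (not_le.2 (Fin.lt_def.2 (by simp only [half_val]; omega)))

variable {S}

lemma isNCPairing_doubling (hS : IsNC S) : IsNCPairing (doubling S) where
  involutive := doubling_involutive S
  ne_self := doubling_ne_self S
  not_crossing a b hab hb hcross := by
    have hrel := hS.rel_of_le (half_mono hab.le) (half_mono hb.le) (half_mono hcross.le)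
      (rel_half_doubling S a) (rel_half_doubling S b)
    exact (doubling_le_of_rel_half S hab hb hrel).not_gt hcross

end Doubling

lemma orbitSetoid_meanderMap {n : ℕ} (π ρ : Setoid (Fin n)) :
    orbitSetoid (meanderMap π ρ) = components (doubling π) (doubling ρ) := by
  refine le_antisymm (orbitSetoid_le_iff.2 fun x => ?_) (components_le_iff.2 fun x => ?_)
  · rcases exists_eq_dEven_or_exists_eq_dOdd x with ⟨j, rfl⟩ | ⟨j, rfl⟩
    · exact Relation.EqvGen.rel _ _ (Or.inl (by rw [doubling_dEven, meanderMap_dEven]))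
    · exact Relation.EqvGen.rel _ _ (Or.inr (by rw [doubling_dOdd, meanderMap_dOdd]))
  · rcases exists_eq_dEven_or_exists_eq_dOdd x with ⟨j, rfl⟩ | ⟨j, rfl⟩
    · refine ⟨Relation.EqvGen.rel _ _ ?_, Relation.EqvGen.symm _ _ (Relation.EqvGen.rel _ _ ?_)⟩
      · rw [doubling_dEven, meanderMap_dEven]
      · rw [doubling_dEven, meanderMap_dOdd, nextP_prevP]
    · refine ⟨Relation.EqvGen.symm _ _ (Relation.EqvGen.rel _ _ ?_), Relation.EqvGen.rel _ _ ?_⟩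
      · rw [doubling_dOdd, meanderMap_dEven, prevP_nextP]
      · rw [doubling_dOdd, meanderMap_dOdd]

/-- Take `e` the last point of the block of `a` before `b`: then `b` lies under the step from
`e` to `nextP S e`. -/
lemma isNC_of_forall_lt_nextP {n : ℕ} {S : Setoid (Fin n)}
    (h : ∀ e b d, e < b → b < nextP S e → S.r b d → d < nextP S e) : IsNC S := by
  intro a b c d hab hbc hcd hac hbd
  by_contra hr
  obtain ⟨e, he, hmax⟩ := (Finset.univ.filter fun x => S.r a x ∧ x < b).exists_max_image id
    ⟨a, by simp [hab]⟩
  simp only [Finset.mem_filter, Finset.mem_univ, true_and, id] at he hmax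
  have hec : S.r e c := S.trans (S.symm he.1) hac
  have he_lt : e < nextP S e := lt_nextP S hec (he.2.trans hbc)
  have hb_lt : b < nextP S e := by
    have hrel : S.r a (nextP S e) := S.trans he.1 (nextP_rel S e)
    rcases lt_trichotomy (nextP S e) b with hlt | heq | hgt
    · exact absurd (hmax _ ⟨hrel, hlt⟩) (not_le.2 he_lt)
    · exact absurd (heq ▸ hrel) hr
    · exact hgt
  exact absurd ((h e b d he.2 hb_lt hbd).trans_le (nextP_le S hec (he.2.trans hbc)))
    (not_lt.2 hcd.le)

section OrbitPartition

variable {n : ℕ} {g : Fin n → Fin n}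
  (hup : ∀ j, j < g j → ∀ m, g m ∈ Set.Ioo j (g j) ↔ m ∈ Set.Ioo j (g j))
  (hdown : ∀ j, g j ≤ j → ∀ m, g m ∈ Set.Icc (g j) j ↔ m ∈ Set.Icc (g j) j)
include hup hdown

lemma nextP_orbitSetoid : nextP (orbitSetoid g) = g := by
  funext j
  have hrel : (orbitSetoid g).r j (g j) := Relation.EqvGen.rel _ _ rfl
  rcases lt_or_ge j (g j) with hlt | hle
  · refine nextP_eq_of_lt _ hrel hlt fun x hx hjx => not_lt.1 fun hxg => ?_
    exact (lt_irrefl j ((iff_of_orbitSetoid (hup j hlt) hx).2 ⟨hjx, hxg⟩).1)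
  · exact nextP_eq_of_forall _ hrel fun x hx =>
      (iff_of_orbitSetoid (hdown j hle) hx).1 ⟨hle, le_rfl⟩

lemma isNC_orbitSetoid : IsNC (orbitSetoid g) := by
  refine isNC_of_forall_lt_nextP fun e b d heb hb hbd => ?_
  rw [nextP_orbitSetoid hup hdown] at hb ⊢
  exact ((iff_of_orbitSetoid (hup e (heb.trans hb)) hbd).1 ⟨heb, hb⟩).2

end OrbitPartition

section PairingToPartition

variable {n : ℕ} {f : Fin (2*n) → Fin (2*n)}

/-- For `f = doubling S` this is `nextP S`. -/
def pairingSucc (f : Fin (2*n) → Fin (2*n)) (j : Fin n) : Fin n := half (f (dOdd j))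

lemma IsNCPairing.apply_dOdd (hf : IsNCPairing f) (j : Fin n) :
    f (dOdd j) = dEven (pairingSucc f j) :=
  (dEven_half (by have := hf.val_mod_two_ne (dOdd j); simp only [dOdd_val] at this; omega)).symm

lemma IsNCPairing.apply_dEven (hf : IsNCPairing f) (j : Fin n) :
    f (dEven j) = dOdd (half (f (dEven j))) :=
  (dOdd_half (by have := hf.val_mod_two_ne (dEven j); simp only [dEven_val] at this; omega)).symm

lemma IsNCPairing.pairingSucc_mem_Ioo_iff (hf : IsNCPairing f) {j : Fin n}
    (m : Fin n) : pairingSucc f m ∈ Set.Ioo j (pairingSucc f j) ↔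
      m ∈ Set.Ioo j (pairingSucc f j) := by
  have key := hf.apply_mem_Ioo_iff (a := dOdd j) (x := dOdd m)
  rw [hf.apply_dOdd, hf.apply_dOdd] at key
  simp only [Set.mem_Ioo, Fin.lt_def, dOdd_val, dEven_val] at key ⊢
  omega

lemma IsNCPairing.pairingSucc_mem_Icc_iff (hf : IsNCPairing f) {j : Fin n}
    (hj : pairingSucc f j ≤ j) (m : Fin n) : pairingSucc f m ∈ Set.Icc (pairingSucc f j) j ↔
      m ∈ Set.Icc (pairingSucc f j) j := by
  have harc : f (dEven (pairingSucc f j)) = dOdd j := by rw [← hf.apply_dOdd, hf.involutive]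
  have key := hf.apply_mem_Icc_iff (a := dEven (pairingSucc f j)) (x := dOdd m)
    (by rw [harc, Fin.lt_def]; simp only [dOdd_val, dEven_val]; rw [Fin.le_def] at hj; omega)
  rw [harc, hf.apply_dOdd] at key
  simp only [Set.mem_Icc, Fin.le_def, dOdd_val, dEven_val] at key ⊢
  omega

def partitionOf (f : Fin (2*n) → Fin (2*n)) : Setoid (Fin n) := orbitSetoid (pairingSucc f)

lemma IsNCPairing.nextP_partitionOf (hf : IsNCPairing f) :
    nextP (partitionOf f) = pairingSucc f :=
  nextP_orbitSetoid (fun _ _ => hf.pairingSucc_mem_Ioo_iff) fun _ => hf.pairingSucc_mem_Icc_iff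

lemma IsNCPairing.isNC_partitionOf (hf : IsNCPairing f) : IsNC (partitionOf f) :=
  isNC_orbitSetoid (fun _ _ => hf.pairingSucc_mem_Ioo_iff) fun _ => hf.pairingSucc_mem_Icc_iff

lemma IsNCPairing.doubling_partitionOf (hf : IsNCPairing f) : doubling (partitionOf f) = f := by
  funext x
  rcases exists_eq_dEven_or_exists_eq_dOdd x with ⟨j, rfl⟩ | ⟨j, rfl⟩
  · set k := half (f (dEven j))
    have hk : f (dEven j) = dOdd k := hf.apply_dEven j
    have hsucc : pairingSucc f k = j := by simp [pairingSucc, ← hk, hf.involutive _]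
    calc doubling (partitionOf f) (dEven j)
        = dOdd (prevP (partitionOf f) (nextP (partitionOf f) k)) := by
          rw [hf.nextP_partitionOf, hsucc, doubling_dEven]
      _ = f (dEven j) := by rw [prevP_nextP, hk]
  · rw [doubling_dOdd, hf.nextP_partitionOf, hf.apply_dOdd]

lemma partitionOf_doubling {n : ℕ} (S : Setoid (Fin n)) : partitionOf (doubling S) = S := by
  have : pairingSucc (doubling S) = nextP S := funext fun j => by simp [pairingSucc, doubling_dOdd]
  rw [partitionOf, this, orbitSetoid_nextP]

end PairingToPartition

/-- Meandric systems on `α` (pairs of non-crossing pairings, the upper and the lower arcs)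
whose partition into components satisfies `P`. -/
def MeandricSystems (α : Type*) [LinearOrder α] (P : Setoid α → Prop) : Type _ :=
  {q : (α → α) × (α → α) // IsNCPairing q.1 ∧ IsNCPairing q.2 ∧ P (components q.1 q.2)}

instance {α : Type*} [LinearOrder α] [Finite α] (P : Setoid α → Prop) :
    Finite (MeandricSystems α P) :=
  Subtype.finite

lemma MeandricSystems.card_eq_zero_of_odd {m : ℕ} (hm : Odd m) (P : Setoid (Fin m) → Prop) :
    Nat.card (MeandricSystems (Fin m) P) = 0 := by
  have : IsEmpty (MeandricSystems (Fin m) P) :=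
    ⟨fun q => Nat.not_even_iff_odd.2 hm (by simpa using q.2.1.even_card)⟩
  exact Nat.card_of_isEmpty

def MeandricSystems.sigmaEquiv (α : Type*) [LinearOrder α] (P : Setoid α → Prop) :
    MeandricSystems α P ≃ Σ S : {S : Setoid α // P S}, MeandricSystems α (· = S.1) where
  toFun q := ⟨⟨components q.1.1 q.1.2, q.2.2.2⟩, q.1, q.2.1, q.2.2.1, rfl⟩
  invFun p := ⟨p.2.1, p.2.2.1, p.2.2.2.1, by rw [p.2.2.2.2]; exact p.1.2⟩
  left_inv _ := rfl
  right_inv := by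
    rintro ⟨⟨S, hS⟩, q, h₁, h₂, h⟩
    dsimp only at h
    subst h
    rfl

/-- The doubling construction identifies non-crossing partitions of `Fin n` with non-crossing
pairings of `Fin (2*n)`, and turns `meanderMap π ρ` into the meandric system with upper arcs
`A(π)` and lower arcs `A(ρ)`. -/
noncomputable def meanderMapEquiv (n : ℕ) (P : Setoid (Fin (2*n)) → Prop) :
    {pr : Setoid (Fin n) × Setoid (Fin n) //
      IsNC pr.1 ∧ IsNC pr.2 ∧ P (orbitSetoid (meanderMap pr.1 pr.2))} ≃
      MeandricSystems (Fin (2*n)) P where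
  toFun pr := ⟨(doubling pr.1.1, doubling pr.1.2), isNCPairing_doubling pr.2.1,
    isNCPairing_doubling pr.2.2.1, orbitSetoid_meanderMap pr.1.1 pr.1.2 ▸ pr.2.2.2⟩
  invFun q := ⟨(partitionOf q.1.1, partitionOf q.1.2), q.2.1.isNC_partitionOf,
    q.2.2.1.isNC_partitionOf, by
      rw [orbitSetoid_meanderMap, q.2.1.doubling_partitionOf, q.2.2.1.doubling_partitionOf]
      exact q.2.2.2⟩
  left_inv pr := Subtype.ext (Prod.ext (partitionOf_doubling _) (partitionOf_doubling _))
  right_inv q := Subtype.ext (Prod.ext q.2.1.doubling_partitionOf q.2.2.1.doubling_partitionOf)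

lemma meanderNum_eq_card {k : ℕ} (hk : 0 < k) :
    meanderNum k = Nat.card (MeandricSystems (Fin (2*k)) (· = ⊤)) := by
  rw [meanderNum, mcount, ← Nat.card_congr (meanderMapEquiv k (· = ⊤))]
  exact Nat.card_congr (Equiv.subtypeEquivRight fun pr => by
    rw [numOrbits_eq_one_iff (by omega)])

namespace Setoid

variable {α : Type*} (S : Setoid α)

def glue (F : ∀ B : S.classes, B.1 → B.1) (x : α) : α :=
  F ⟨{y | S y x}, S.mem_classes x⟩ ⟨x, S.refl x⟩

lemma glue_apply_of_mem (F : ∀ B : S.classes, B.1 → B.1) {B : Set α} (hB : B ∈ S.classes)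
    {x : α} (hx : x ∈ B) : S.glue F x = F ⟨B, hB⟩ ⟨x, hx⟩ := by
  obtain rfl := S.eq_of_mem_classes (S.mem_classes x) (S.refl x) hB hx
  rfl

lemma semiconj_glue (F : ∀ B : S.classes, B.1 → B.1) (B : S.classes) :
    Function.Semiconj Subtype.val (F B) (S.glue F) :=
  fun y => (S.glue_apply_of_mem F B.2 y.2).symm

lemma rel_glue (F : ∀ B : S.classes, B.1 → B.1) (x : α) : S.r x (S.glue F x) :=
  S.symm (F ⟨_, S.mem_classes x⟩ ⟨x, S.refl x⟩).2

lemma exists_mem_classes_val_eq (x : α) : ∃ (B : S.classes) (y : B.1), y.1 = x :=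
  ⟨⟨_, S.mem_classes x⟩, ⟨x, S.refl x⟩, rfl⟩

lemma mapsTo_of_rel {f : α → α} (hf : ∀ x, S.r x (f x)) {B : Set α} (hB : B ∈ S.classes) :
    Set.MapsTo f B B := by
  obtain ⟨c, rfl⟩ := hB
  exact fun x hx => S.trans (S.symm (hf x)) hx

lemma restrict_glue (F : ∀ B : S.classes, B.1 → B.1) (B : S.classes) :
    (S.mapsTo_of_rel (S.rel_glue F) B.2).restrict (S.glue F) B B = F B :=
  funext fun y => Subtype.ext ((S.semiconj_glue F B).eq y).symm

lemma components_glue {F G : ∀ B : S.classes, B.1 → B.1}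
    (h : ∀ B, components (F B) (G B) = ⊤) : components (S.glue F) (S.glue G) = S := by
  refine le_antisymm (components_le_iff.2 fun x => ⟨S.rel_glue F x, S.rel_glue G x⟩)
    fun x y hxy => ?_
  let B : S.classes := ⟨_, S.mem_classes y⟩
  refine components_rel_of_semiconj (S.semiconj_glue F B) (S.semiconj_glue G B)
    (i := ⟨x, hxy⟩) (j := ⟨y, S.refl y⟩) ?_
  rw [h B]
  trivial

end Setoid

lemma isNCPairing_glue {M : ℕ} {S : Setoid (Fin M)} (hS : IsNC S)
    {F : ∀ B : S.classes, B.1 → B.1} (hF : ∀ B, IsNCPairing (F B)) :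
    IsNCPairing (S.glue F) where
  involutive x := by
    obtain ⟨B, y, rfl⟩ := S.exists_mem_classes_val_eq x
    rw [← (S.semiconj_glue F B).eq, ← (S.semiconj_glue F B).eq, (hF B).involutive]
  ne_self x := by
    obtain ⟨B, y, rfl⟩ := S.exists_mem_classes_val_eq x
    rw [← (S.semiconj_glue F B).eq]
    exact fun h => (hF B).ne_self y (Subtype.ext h)
  not_crossing a b hab hb hcross := by
    have hrel : S.r a b := by
      by_contra hr
      exact hr (hS a b _ _ hab hb hcross (S.rel_glue F a) (S.rel_glue F b))
    let B : S.classes := ⟨_, S.mem_classes b⟩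
    have ha : S.glue F a = F B ⟨a, hrel⟩ := S.glue_apply_of_mem F B.2 _
    have hb' : S.glue F b = F B ⟨b, S.refl b⟩ := S.glue_apply_of_mem F B.2 _
    rw [ha, hb'] at hcross
    rw [ha] at hb
    exact (hF B).not_crossing ⟨a, hrel⟩ ⟨b, S.refl b⟩ hab hb hcross

lemma components_restrict_eq_top {α : Type*} {f g : α → α} (hf : Function.Involutive f)
    (hg : Function.Involutive g) {B : Set α} (hfB : Set.MapsTo f B B) (hgB : Set.MapsTo g B B)
    (hB : ∀ x ∈ B, ∀ y ∈ B, (components f g).r x y) :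
    components (hfB.restrict f B B) (hgB.restrict g B B) = ⊤ := by
  have hmem : ∀ {x y}, (components f g).r x y → (x ∈ B ↔ y ∈ B) := fun h =>
    h.iff_of_invariant fun a b hab => by
      rcases hab with rfl | rfl
      · exact ⟨fun ha => hfB ha, fun hb => hf a ▸ hfB hb⟩
      · exact ⟨fun ha => hgB ha, fun hb => hg a ▸ hgB hb⟩
  have key : ∀ x y, (components f g).r x y → ∀ (hx : x ∈ B) (hy : y ∈ B),
      (components (hfB.restrict f B B) (hgB.restrict g B B)).r ⟨x, hx⟩ ⟨y, hy⟩ := by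
    intro x y h
    induction h with
    | rel a b hab =>
      exact fun _ _ => Relation.EqvGen.rel _ _ (hab.imp Subtype.ext Subtype.ext)
    | refl a => exact fun _ _ => Relation.EqvGen.refl _
    | symm a b _ ih => exact fun ha hb => Relation.EqvGen.symm _ _ (ih hb ha)
    | trans a b c hab _ ih₁ ih₂ =>
      exact fun ha hc => Relation.EqvGen.trans _ _ _ (ih₁ ha ((hmem hab).1 ha))
        (ih₂ ((hmem hab).1 ha) hc)
  exact eq_top_iff.2 fun x y _ => key x y (hB x x.2 y y.2) x.2 y.2

namespace MeandricSystems

def restrict {α : Type*} [LinearOrder α] {S : Setoid α} (q : MeandricSystems α (· = S))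
    (B : S.classes) : MeandricSystems B.1 (· = ⊤) :=
  have hrel := components_le_iff.1 q.2.2.2.le
  have hf := S.mapsTo_of_rel (fun x => (hrel x).1) B.2
  have hg := S.mapsTo_of_rel (fun x => (hrel x).2) B.2
  ⟨(hf.restrict _ _ _, hg.restrict _ _ _),
    q.2.1.of_semiconj (Subtype.strictMono_coe _) fun _ => rfl,
    q.2.2.1.of_semiconj (Subtype.strictMono_coe _) fun _ => rfl,
    components_restrict_eq_top q.2.1.involutive q.2.2.1.involutive hf hg fun x hx y hy => by
      rw [q.2.2.2]
      exact S.rel_iff_exists_classes.2 ⟨B, B.2, hx, hy⟩⟩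

def glue {M : ℕ} {S : Setoid (Fin M)} (hS : IsNC S)
    (Q : ∀ B : S.classes, MeandricSystems B.1 (· = ⊤)) : MeandricSystems (Fin M) (· = S) :=
  ⟨(S.glue fun B => (Q B).1.1, S.glue fun B => (Q B).1.2),
    isNCPairing_glue hS fun B => (Q B).2.1, isNCPairing_glue hS fun B => (Q B).2.2.1,
    S.components_glue fun B => (Q B).2.2.2⟩

def equivPi {M : ℕ} {S : Setoid (Fin M)} (hS : IsNC S) :
    MeandricSystems (Fin M) (· = S) ≃ ∀ B : S.classes, MeandricSystems B.1 (· = ⊤) where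
  toFun q := q.restrict
  invFun Q := glue hS Q
  left_inv _ := rfl
  right_inv Q := funext fun B => Subtype.ext
    (Prod.ext (S.restrict_glue (fun B => (Q B).1.1) B) (S.restrict_glue (fun B => (Q B).1.2) B))

def mapTop {α β : Type*} [LinearOrder α] [LinearOrder β] (e : α ≃o β)
    (q : MeandricSystems α (· = ⊤)) : MeandricSystems β (· = ⊤) :=
  ⟨(e ∘ q.1.1 ∘ e.symm, e ∘ q.1.2 ∘ e.symm),
    q.2.1.of_semiconj e.symm.strictMono fun _ => by simp,
    q.2.2.1.of_semiconj e.symm.strictMono fun _ => by simp,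
    eq_top_iff.2 fun y y' _ => by
      have := components_rel_of_semiconj (u := e) (f := e ∘ q.1.1 ∘ e.symm)
        (g := e ∘ q.1.2 ∘ e.symm) (f' := q.1.1) (g' := q.1.2)
        (fun _ => by simp) (fun _ => by simp) (i := e.symm y) (j := e.symm y')
        (by rw [q.2.2.2]; trivial)
      simpa using this⟩

def congrTop {α β : Type*} [LinearOrder α] [LinearOrder β] (e : α ≃o β) :
    MeandricSystems α (· = ⊤) ≃ MeandricSystems β (· = ⊤) where
  toFun := mapTop e
  invFun := mapTop e.symm
  left_inv q := Subtype.ext (Prod.ext (funext fun _ => by simp [mapTop])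
    (funext fun _ => by simp [mapTop]))
  right_inv q := Subtype.ext (Prod.ext (funext fun _ => by simp [mapTop])
    (funext fun _ => by simp [mapTop]))

lemma card_top_eq_card_fin (α : Type*) [LinearOrder α] [Finite α] :
    Nat.card (MeandricSystems α (· = ⊤)) =
      Nat.card (MeandricSystems (Fin (Nat.card α)) (· = ⊤)) := by
  have := Fintype.ofFinite α
  exact Nat.card_congr (congrTop (monoEquivOfFin α Nat.card_eq_fintype_card.symm)).symm

lemma card_eq_finprod {M : ℕ} {S : Setoid (Fin M)} (hS : IsNC S) :
    Nat.card (MeandricSystems (Fin M) (· = S)) =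
      ∏ᶠ B ∈ S.classes, Nat.card (MeandricSystems (Fin B.ncard) (· = ⊤)) := by
  have := Fintype.ofFinite S.classes
  rw [Nat.card_congr (equivPi hS), Nat.card_pi, ← finprod_eq_prod_of_fintype,
    ← finprod_set_coe_eq_finprod_mem]
  exact finprod_congr fun B => card_top_eq_card_fin B.1

lemma card_isNC_eq_finsum (M : ℕ) :
    Nat.card (MeandricSystems (Fin M) IsNC) =
      ∑ᶠ S ∈ {S : Setoid (Fin M) | IsNC S},
        ∏ᶠ B ∈ S.classes, Nat.card (MeandricSystems (Fin B.ncard) (· = ⊤)) := by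
  have := Fintype.ofFinite {S : Setoid (Fin M) // IsNC S}
  rw [Nat.card_congr (sigmaEquiv _ _), Nat.card_sigma, ← finsum_eq_sum_of_fintype,
    ← finsum_set_coe_eq_finsum_mem]
  exact finsum_congr fun S => card_eq_finprod S.2

end MeandricSystems

open Polynomial in
theorem moments_of_meander_cumulant_functional_general
    (ν : Polynomial ℂ →ₗ[ℂ] ℂ) (κ : ℕ → ℂ)
    (h : MomCum (fun n => ν (X ^ n)) κ)
    (hodd : ∀ n : ℕ, 0 < n → κ (2*n - 1) = 0)
    (heven : ∀ n : ℕ, 0 < n → κ (2*n) = (meanderNum n : ℂ)) :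
    ∀ n : ℕ, 0 < n →
      ν (X ^ (2*n - 1)) = 0 ∧
      ν (X ^ (2*n)) =
        (Nat.card {pr : Setoid (Fin n) × Setoid (Fin n) //
          IsNC pr.1 ∧ IsNC pr.2 ∧
          IsNC (orbitSetoid (meanderMap pr.1 pr.2))} : ℂ) := by
  have hκ : ∀ m, 0 < m → κ m = Nat.card (MeandricSystems (Fin m) (· = ⊤)) := by
    intro m hm
    rcases Nat.even_or_odd' m with ⟨k, rfl | rfl⟩
    · rw [heven k (by omega), meanderNum_eq_card (by omega)]
    · rw [MeandricSystems.card_eq_zero_of_odd (odd_two_mul_add_one k), Nat.cast_zero,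
        show 2 * k + 1 = 2 * (k + 1) - 1 by omega, hodd (k + 1) k.succ_pos]
  have hmoment : ∀ m, 0 < m → ν (X ^ m) = Nat.card (MeandricSystems (Fin m) IsNC) := by
    intro m hm
    rw [show ν (X ^ m) = _ from h m hm, MeandricSystems.card_isNC_eq_finsum,
      Nat.cast_finsum_mem (Set.toFinite _)]
    refine finsum_mem_congr rfl fun S _ => ?_
    rw [Nat.cast_finprod_mem (Set.toFinite _)]
    refine finprod_mem_congr rfl fun B hB => hκ _ ((Set.ncard_pos B.toFinite).2 ?_)
    exact Set.nonempty_iff_ne_empty.2 fun hempty => Setoid.empty_notMem_classes (hempty ▸ hB)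
  intro n hn
  refine ⟨?_, ?_⟩
  · rw [hmoment _ (by omega), MeandricSystems.card_eq_zero_of_odd (by
      rw [show 2 * n - 1 = 2 * (n - 1) + 1 by omega]; exact odd_two_mul_add_one _), Nat.cast_zero]
  · rw [hmoment _ (by omega), Nat.card_congr (meanderMapEquiv n IsNC)]

open Polynomial in
/-- Let `ν` be the unital linear functional on `ℂ[X]` whose free cumulants are
`κ_{2n-1} = 0` and `κ_{2n} = m^{(1)}_n` (the meander numbers).  Then the odd
moments of `ν` vanish and `ν(X^{2n})` counts the pairs `(π,ρ) ∈ NC(n)²` whose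
meandric system `M_{π,ρ}` is strictly non-crossing, i.e. whose orbit partition
is a non-crossing partition of `{1,…,2n}`. -/
theorem moments_of_meander_cumulant_functional
    (ν : Polynomial ℂ →ₗ[ℂ] ℂ) (hν : ν 1 = 1) (κ : ℕ → ℂ)
    (h : MomCum (fun n => ν (X ^ n)) κ)
    (hodd : ∀ n : ℕ, 0 < n → κ (2*n - 1) = 0)
    (heven : ∀ n : ℕ, 0 < n → κ (2*n) = (meanderNum n : ℂ)) :
    ∀ n : ℕ, 0 < n →
      ν (X ^ (2*n - 1)) = 0 ∧
      ν (X ^ (2*n)) =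
        (Nat.card {pr : Setoid (Fin n) × Setoid (Fin n) //
          IsNC pr.1 ∧ IsNC pr.2 ∧
          IsNC (orbitSetoid (meanderMap pr.1 pr.2))} : ℂ) :=
  moments_of_meander_cumulant_functional_general ν κ h hodd heven
end
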